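/- arXiv:0903.2058 — 2 statements merged into one kernel-verified Lean document; each statement's English description precedes it below -/
import Mathlib

section
/- Let L be the negative definite root lattice of 3A₅ ⊕ 3A₁ with A₅ chains e₁…e₅, e₆…e₁₀, e₁₁…e₁₅ and A₁'s e₁₆, e₁₇, e₁₈, and N = ℤλ ⊕ L with λ² = 2. Define u₁ = (Σ_{i=1}^{5} i(e_{i+5}+e_{i+10}) + e₁₇ + e₁₈)/2 and v₁ = (Σ_{i=1}^{5} i(e_i+e_{i+10}) + e₁₆ + e₁₈)/2. Then u₁ and v₁ pair integrally with all of N, have even square, and the lattice A₁ generated by N, u₁, v₁ is an even overlattice of N of index 4. -/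
open Matrix

/-- Dynkin-diagram edges for 3A₅ ⊕ 3A₁ (index 0 reserved for λ):
A₅ chains e₁…e₅, e₆…e₁₀, e₁₁…e₁₅; A₁'s e₁₆, e₁₇, e₁₈. -/
def adj : List (ℕ × ℕ) :=
  [(1,2),(2,3),(3,4),(4,5),
   (6,7),(7,8),(8,9),(9,10),
   (11,12),(12,13),(13,14),(14,15)]

/-- Gram matrix of N = ℤλ ⊕ L(3A₅+3A₁): λ² = 2, roots of square −2. -/
def gramN : Matrix (Fin 19) (Fin 19) ℚ := fun i j =>
  if i = j then (if i.val = 0 then 2 else -2)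
  else if (i.val, j.val) ∈ adj ∨ (j.val, i.val) ∈ adj then 1 else 0

/-- The bilinear form extended ℚ-bilinearly. -/
def form (x y : Fin 19 → ℚ) : ℚ := x ⬝ᵥ gramN.mulVec y

/-- The lattice N: integer coordinate vectors. -/
def IntLat : AddSubgroup (Fin 19 → ℚ) where
  carrier := {x | ∀ i, ∃ k : ℤ, x i = (k : ℚ)}
  zero_mem' := fun i => ⟨0, by simp⟩
  add_mem' := by
    intro a b ha hb i
    obtain ⟨p, hp⟩ := ha i; obtain ⟨q, hq⟩ := hb i
    exact ⟨p + q, by simp [hp, hq]⟩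
  neg_mem' := by
    intro a ha i
    obtain ⟨p, hp⟩ := ha i
    exact ⟨-p, by simp [hp]⟩

/-- u₁ = (Σ_{i=1}^{5} i(e_{i+5}+e_{i+10}) + e₁₇ + e₁₈)/2. -/
def u₁ : Fin 19 → ℚ :=
  ![0, 0,0,0,0,0, 1/2,1,3/2,2,5/2, 1/2,1,3/2,2,5/2, 0,1/2,1/2]

/-- v₁ = (Σ_{i=1}^{5} i(e_i+e_{i+10}) + e₁₆ + e₁₈)/2. -/
def v₁ : Fin 19 → ℚ :=
  ![0, 1/2,1,3/2,2,5/2, 0,0,0,0,0, 1/2,1,3/2,2,5/2, 1/2,0,1/2]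

/-- A₁lat: the lattice generated by N, u₁ and v₁. -/
def A₁lat : AddSubgroup (Fin 19 → ℚ) :=
  IntLat ⊔ AddSubgroup.zmultiples u₁ ⊔ AddSubgroup.zmultiples v₁

/-! Both `u₁ ᵥ* G` and `v₁ ᵥ* G` are integer vectors, so `u₁` and `v₁` lie in the dual of `N`, and
their norms and mutual pairing are `-16, -16, -8`. As `(y + a u)² = y² + 2a (u · y) + a² u²`,
adjoining to an even lattice a vector of even norm that pairs integrally with it keeps the lattice
even; do this first with `u₁`, then with `v₁`. For the index, twice each vector lies in `N`, while
`u₁ ∉ N` and `v₁ ∉ N + ℤu₁` (their `e₆`- resp. `e₁`-coordinates are `1/2`), so both steps have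
index `2`. -/

namespace LinearMap.BilinForm

variable {R V : Type*} [CommRing R] [AddCommGroup V] [Module R V] (B : LinearMap.BilinForm R V)

def integralPairing (v : V) : AddSubgroup V :=
  (Int.castAddHom R).range.comap (B v).toAddMonoidHom

variable {B}

theorem mem_integralPairing {v x : V} : x ∈ B.integralPairing v ↔ ∃ k : ℤ, B v x = k := by
  simp only [integralPairing, AddSubgroup.mem_comap, AddMonoidHom.mem_range, Int.coe_castAddHom,
    LinearMap.toAddMonoidHom_coe, eq_comm]

theorem IsSymm.even_sup_zmultiples (hB : B.IsSymm) {L : AddSubgroup V} {u : V}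
    (hL : ∀ x ∈ L, ∃ k : ℤ, B x x = 2 * k) (hLu : L ≤ B.integralPairing u)
    (hu : ∃ k : ℤ, B u u = 2 * k) :
    ∀ x ∈ L ⊔ AddSubgroup.zmultiples u, ∃ k : ℤ, B x x = 2 * k := by
  intro x hx
  obtain ⟨y, hy, _, ⟨a, rfl⟩, rfl⟩ := AddSubgroup.mem_sup.1 hx
  obtain ⟨k, hk⟩ := hL y hy
  obtain ⟨m, hm⟩ := mem_integralPairing.1 (hLu hy)
  obtain ⟨n, hn⟩ := hu
  refine ⟨k + a * m + a ^ 2 * n, ?_⟩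
  simp only [map_add, map_zsmul, LinearMap.add_apply, LinearMap.smul_apply, zsmul_eq_mul,
    hB.eq y u, hk, hm, hn]
  push_cast
  ring

end LinearMap.BilinForm

theorem Matrix.even_dotProduct_mulVec_self {n : Type*} [Fintype n] {G : Matrix n n ℤ}
    (hG : G.IsSymm) (hdiag : ∀ i, Even (G i i)) (x : n → ℤ) : Even (x ⬝ᵥ G *ᵥ x) := by
  classical
  let _ : LinearOrder n := LinearOrder.lift' _ (Fintype.equivFin n).injective
  let U : Matrix n n ℤ := of fun i j => if i < j then G i j else 0
  have hsplit : G = diagonal G.diag + U + Uᵀ := by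
    ext i j
    rcases lt_trichotomy i j with h | rfl | h
    · simp [U, h, h.ne, h.not_gt]
    · simp [U]
    · simp [U, h, h.ne', h.not_gt, hG.apply i j]
  have hUt : x ⬝ᵥ Uᵀ *ᵥ x = x ⬝ᵥ U *ᵥ x := by
    rw [dotProduct_mulVec, vecMul_transpose, dotProduct_comm]
  rw [hsplit, add_mulVec, add_mulVec, dotProduct_add, dotProduct_add, hUt, add_assoc, ← two_mul]
  refine Even.add ?_ (even_two_mul _)
  rw [even_iff_two_dvd]
  exact Finset.dvd_sum fun i _ => by
    rw [mulVec_diagonal]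
    exact ((even_iff_two_dvd.1 (hdiag i)).mul_right _).mul_left _

theorem AddSubgroup.relIndex_sup_zmultiples_of_prime {G : Type*} [AddCommGroup G]
    {H : AddSubgroup G} {g : G} {p : ℕ} (hp : p.Prime) (hg : g ∉ H) (hpg : p • g ∈ H) :
    H.relIndex (H ⊔ zmultiples g) = p := by
  rw [relIndex_sup_left, ← range_zmultiplesHom, ← index_comap]
  set K := H.comap (zmultiplesHom G g)
  have hpK : zmultiples (p : ℤ) ≤ K := zmultiples_le_of_mem (by simpa [K] using hpg)
  have hK : K.index ≠ 1 := fun h => by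
    have h1 : (1 : ℤ) ∈ K := index_eq_one.1 h ▸ mem_top 1
    exact hg (by simpa [K] using h1)
  have hdvd := index_dvd_of_le hpK
  rw [Int.index_zmultiples, Int.natAbs_natCast] at hdvd
  exact (hp.eq_one_or_self_of_dvd _ hdvd).resolve_left hK

def gramZ : Matrix (Fin 19) (Fin 19) ℤ := fun i j =>
  if i = j then (if i.val = 0 then 2 else -2)
  else if (i.val, j.val) ∈ adj ∨ (j.val, i.val) ∈ adj then 1 else 0

theorem gramN_eq_map_gramZ : gramN = gramZ.map (↑) := by
  ext i j
  simp only [gramN, gramZ, map_apply]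
  split_ifs <;> norm_num

theorem form_eq_toBilin' (x y : Fin 19 → ℚ) : form x y = gramN.toBilin' x y :=
  (Matrix.toBilin'_apply' _ _ _).symm

theorem isSymm_toBilin'_gramN : gramN.toBilin'.IsSymm :=
  Matrix.isSymm_toBilin'_iff_isSymm.2 (by decide)

theorem mem_intLat_iff {x : Fin 19 → ℚ} : x ∈ IntLat ↔ ∃ m : Fin 19 → ℤ, x = (↑) ∘ m := by
  refine ⟨fun hx => ?_, ?_⟩
  · choose m hm using hx
    exact ⟨m, funext hm⟩
  · rintro ⟨m, rfl⟩ i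
    exact ⟨m i, rfl⟩

theorem form_self_even_of_mem_intLat {w : Fin 19 → ℚ} (hw : w ∈ IntLat) :
    ∃ k : ℤ, form w w = 2 * k := by
  obtain ⟨m, rfl⟩ := mem_intLat_iff.1 hw
  obtain ⟨k, hk⟩ := Matrix.even_dotProduct_mulVec_self (G := gramZ) (by decide) (by decide) m
  refine ⟨k, ?_⟩
  have hcast : form ((↑) ∘ m) ((↑) ∘ m) = ((m ⬝ᵥ gramZ *ᵥ m : ℤ) : ℚ) := by
    rw [form, gramN_eq_map_gramZ]
    simp only [dotProduct, mulVec, map_apply, Function.comp_apply]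
    push_cast
    rfl
  rw [hcast, hk]
  push_cast
  ring

theorem intLat_le_integralPairing {x : Fin 19 → ℚ} {a : Fin 19 → ℤ}
    (ha : x ᵥ* gramN = (↑) ∘ a) : IntLat ≤ gramN.toBilin'.integralPairing x := by
  intro w hw
  obtain ⟨m, rfl⟩ := mem_intLat_iff.1 hw
  refine LinearMap.BilinForm.mem_integralPairing.2 ⟨a ⬝ᵥ m, ?_⟩
  rw [Matrix.toBilin'_apply', dotProduct_mulVec, ha]
  simp [dotProduct]

theorem vecMul_u₁ :
    u₁ ᵥ* gramN = (↑) ∘ ![(0 : ℤ), 0, 0, 0, 0, 0, 0, 0, 0, 0, -3, 0, 0, 0, 0, -3, 0, -1, -1] := by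
  ext j
  fin_cases j <;> simp [vecMul, dotProduct, Fin.sum_univ_succ, gramN, u₁, adj] <;> norm_num

theorem vecMul_v₁ :
    v₁ ᵥ* gramN = (↑) ∘ ![(0 : ℤ), 0, 0, 0, 0, -3, 0, 0, 0, 0, 0, 0, 0, 0, 0, -3, -1, 0, -1] := by
  ext j
  fin_cases j <;> simp [vecMul, dotProduct, Fin.sum_univ_succ, gramN, v₁, adj] <;> norm_num

theorem form_u₁_u₁ : form u₁ u₁ = -16 := by
  rw [form, dotProduct_mulVec, vecMul_u₁]
  norm_num [dotProduct, Fin.sum_univ_succ, u₁]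

theorem form_v₁_v₁ : form v₁ v₁ = -16 := by
  rw [form, dotProduct_mulVec, vecMul_v₁]
  norm_num [dotProduct, Fin.sum_univ_succ, v₁]

theorem form_v₁_u₁ : form v₁ u₁ = -8 := by
  rw [form, dotProduct_mulVec, vecMul_v₁]
  norm_num [dotProduct, Fin.sum_univ_succ, u₁]

theorem two_nsmul_u₁_mem_intLat : 2 • u₁ ∈ IntLat :=
  mem_intLat_iff.2 ⟨![0, 0, 0, 0, 0, 0, 1, 2, 3, 4, 5, 1, 2, 3, 4, 5, 0, 1, 1], by
    ext i; fin_cases i <;> norm_num [u₁]⟩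

theorem two_nsmul_v₁_mem_intLat : 2 • v₁ ∈ IntLat :=
  mem_intLat_iff.2 ⟨![0, 1, 2, 3, 4, 5, 0, 0, 0, 0, 0, 1, 2, 3, 4, 5, 1, 0, 1], by
    ext i; fin_cases i <;> norm_num [v₁]⟩

theorem intCast_ne_half (k : ℤ) : (k : ℚ) ≠ 1 / 2 := by
  intro h
  have h2 : ((2 * k : ℤ) : ℚ) = 1 := by push_cast; rw [h]; norm_num
  norm_cast at h2
  omega

theorem u₁_notMem_intLat : u₁ ∉ IntLat := fun h => by
  obtain ⟨k, hk⟩ := h 6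
  exact intCast_ne_half k hk.symm

theorem v₁_notMem_sup : v₁ ∉ IntLat ⊔ AddSubgroup.zmultiples u₁ := by
  let C := (Int.castAddHom ℚ).range.comap (Pi.evalAddMonoidHom (fun _ : Fin 19 => ℚ) 1)
  have hle : IntLat ⊔ AddSubgroup.zmultiples u₁ ≤ C :=
    sup_le (fun x hx => by obtain ⟨k, hk⟩ := hx 1; exact ⟨k, hk.symm⟩)
      (AddSubgroup.zmultiples_le_of_mem ⟨0, by simp [u₁]⟩)
  intro hv
  obtain ⟨k, hk⟩ := hle hv
  exact intCast_ne_half k hk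

theorem intLat_le_integralPairing_u₁ : IntLat ≤ gramN.toBilin'.integralPairing u₁ :=
  intLat_le_integralPairing vecMul_u₁

theorem sup_zmultiples_u₁_le_integralPairing_v₁ :
    IntLat ⊔ AddSubgroup.zmultiples u₁ ≤ gramN.toBilin'.integralPairing v₁ := by
  refine sup_le (intLat_le_integralPairing vecMul_v₁) (AddSubgroup.zmultiples_le_of_mem ?_)
  refine LinearMap.BilinForm.mem_integralPairing.2 ⟨-8, ?_⟩
  rw [← form_eq_toBilin', form_v₁_u₁]
  norm_num

/-- u₁ and v₁ pair integrally with N and have even square, and the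
lattice generated by N, u₁, v₁ is an even overlattice of N of index 4. -/
theorem threeA5_threeA1_overlattice :
    (∀ w ∈ IntLat, ∃ k : ℤ, form u₁ w = (k : ℚ)) ∧
    (∀ w ∈ IntLat, ∃ k : ℤ, form v₁ w = (k : ℚ)) ∧
    (∃ k : ℤ, form u₁ u₁ = 2 * (k : ℚ)) ∧
    (∃ k : ℤ, form v₁ v₁ = 2 * (k : ℚ)) ∧
    (∀ x ∈ A₁lat, ∃ k : ℤ, form x x = 2 * (k : ℚ)) ∧
    IntLat.relIndex A₁lat = 4 := by
  have hu := intLat_le_integralPairing_u₁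
  have hv := sup_zmultiples_u₁_le_integralPairing_v₁
  have huu : ∃ k : ℤ, form u₁ u₁ = 2 * k := ⟨-8, by rw [form_u₁_u₁]; norm_num⟩
  have hvv : ∃ k : ℤ, form v₁ v₁ = 2 * k := ⟨-8, by rw [form_v₁_v₁]; norm_num⟩
  have hN : ∀ w ∈ IntLat, ∃ k : ℤ, form w w = 2 * k := fun _ => form_self_even_of_mem_intLat
  simp only [form_eq_toBilin'] at huu hvv hN ⊢
  refine ⟨fun w hw => LinearMap.BilinForm.mem_integralPairing.1 (hu hw),
    fun w hw => LinearMap.BilinForm.mem_integralPairing.1 (hv (AddSubgroup.mem_sup_left hw)),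
    huu, hvv, ?_, ?_⟩
  · have hB := isSymm_toBilin'_gramN
    exact hB.even_sup_zmultiples (hB.even_sup_zmultiples hN hu huu) hv hvv
  · rw [A₁lat, ← AddSubgroup.relIndex_mul_relIndex _ _ _ le_sup_left le_sup_left,
      AddSubgroup.relIndex_sup_zmultiples_of_prime Nat.prime_two u₁_notMem_intLat
        two_nsmul_u₁_mem_intLat,
      AddSubgroup.relIndex_sup_zmultiples_of_prime Nat.prime_two v₁_notMem_sup
        (AddSubgroup.mem_sup_left two_nsmul_v₁_mem_intLat)]
end

section
/- Let C₂ be the sextic curve defined by (x₁x₂+3x₀x₁+8x₀²+3x₀x₂)(3x₁³x₂+x₀x₁³−2x₁²x₂²+3x₀x₁²x₂+3x₁x₂³+3x₀x₁x₂²+x₀x₂³) = 0 and Q the conic x₀x₁+x₀x₂+x₁x₂ = 0. Then Q passes through all four points (1:0:0), (1:−2:−2), (0:1:0), (0:0:1), and the intersection multiplicity of Q with the quartic factor of C₂ at (1:0:0) is 4. -/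
/-! On the affine conic `(1 + x) y + x = 0` the quartic satisfies
`(1 + x)³ f(x, y) = -2 x⁴ (x + 2)²`, so along the branch of the conic through the origin
it vanishes to order exactly 4. -/

open Polynomial

/-- The conic Q: x₀x₁ + x₀x₂ + x₁x₂ = 0. -/
def Q (x : Fin 3 → ℂ) : ℂ := x 0 * x 1 + x 0 * x 2 + x 1 * x 2

/-- The quartic factor of the sextic C₂:
3x₁³x₂ + x₀x₁³ − 2x₁²x₂² + 3x₀x₁²x₂ + 3x₁x₂³ + 3x₀x₁x₂² + x₀x₂³. -/
def quartic (x : Fin 3 → ℂ) : ℂ :=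
  3 * (x 1) ^ 3 * x 2 + x 0 * (x 1) ^ 3 - 2 * (x 1) ^ 2 * (x 2) ^ 2 +
    3 * x 0 * (x 1) ^ 2 * x 2 + 3 * x 1 * (x 2) ^ 3 + 3 * x 0 * x 1 * (x 2) ^ 2 +
    x 0 * (x 2) ^ 3

/-- The quartic in the affine chart x₀ = 1. -/
def f (x y : ℂ) : ℂ := quartic ![1, x, y]

lemma Q_chart (x y : ℂ) : Q ![1, x, y] = (1 + x) * y + x := by
  simp only [Q, Matrix.cons_val_zero, Matrix.cons_val_one, Matrix.cons_val_two,
    Matrix.head_cons, Matrix.tail_cons]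
  ring

lemma cube_mul_f_of_Q_eq_zero {x y : ℂ} (h : Q ![1, x, y] = 0) :
    (1 + x) ^ 3 * f x y = -2 * x ^ 4 * (x + 2) ^ 2 := by
  rw [Q_chart] at h
  simp only [f, quartic, Matrix.cons_val_zero, Matrix.cons_val_one, Matrix.cons_val_two,
    Matrix.head_cons, Matrix.tail_cons]
  -- the cofactor is the quotient of the left side minus the right side by the conic equation
  linear_combination ((3 * x ^ 3 + 7 * x ^ 2 + 5 * x + 1) * y ^ 2
    + (-2 * x ^ 4 - 4 * x ^ 3 + 2 * x) * y + (3 * x ^ 5 + 11 * x ^ 4 + 11 * x ^ 3 + x ^ 2)) * h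

lemma Q_branch_eq_zero {t : ℂ} (ht : t ≠ -1) : Q ![1, t, -t / (1 + t)] = 0 := by
  have h : (1 : ℂ) + t ≠ 0 := fun h => ht (by linear_combination h)
  rw [Q_chart]
  field_simp
  ring

/-- The intersection multiplicity at (1:0:0) is expressed via the smooth local parametrization
t ↦ (t, −t/(1+t)) of the branch of Q through the origin of the chart x₀ = 1
(Q: x + y + xy = 0 gives y = −x/(1+x)): the pullback of the quartic along it
vanishes to order exactly 4 at t = 0. -/
theorem conic_quartic_intersection :
    Q ![1, 0, 0] = 0 ∧ Q ![1, -2, -2] = 0 ∧ Q ![0, 1, 0] = 0 ∧ Q ![0, 0, 1] = 0 ∧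
    ∃ (m : ℕ) (w : Polynomial ℂ),
      (∀ t : ℂ, t ≠ -1 → (1 + t) ^ m * f t (-t / (1 + t)) = t ^ 4 * w.eval t) ∧
      w.eval 0 ≠ 0 := by
  refine ⟨by simp [Q], by norm_num [Q, Matrix.cons_val_two], by simp [Q], by simp [Q],
    3, C (-2) * (X + C 2) ^ 2, fun t ht => ?_, by norm_num⟩
  rw [cube_mul_f_of_Q_eq_zero (Q_branch_eq_zero ht)]
  simp only [eval_mul, eval_pow, eval_add, eval_C, eval_X]
  ring
end
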